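/- arXiv:1004.2759 — 3 statements merged into one kernel-verified Lean document; each statement's English description precedes it below -/
import Mathlib

section
/- For every natural number n and every k with 2k < n, the restriction of the up operator U to V(B(n)_k) is injective as a map into V(B(n)_{k+1}). -/
/-- `V n` is the complex vector space with basis `B(n)`, the set of all
subsets of `[n] = {1, …, n}` (modeled as `Finset (Fin n)`). -/
abbrev V (n : ℕ) : Type := Finset (Fin n) →₀ ℂ

/-- `V(B(n)_k)`: the span of the `k`-subsets of `[n]`, i.e. the elements of
`V n` supported on subsets of cardinality `k`. -/
noncomputable def rankSubmodule (n k : ℕ) : Submodule ℂ (V n) :=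
  Finsupp.supported ℂ ℂ {X : Finset (Fin n) | X.card = k}

/-- The up operator `U : V(B(n)) → V(B(n))`, defined on a basis element `X` by
`U(X) = Σ_Y Y`, the sum over all `Y ⊆ [n]` with `X ⊆ Y` and `|Y| = |X| + 1`. -/
noncomputable def upMap (n : ℕ) : V n →ₗ[ℂ] V n :=
  Finsupp.lift (V n) ℂ (Finset (Fin n)) fun X =>
    ∑ Y ∈ Finset.univ.filter (fun Y : Finset (Fin n) => X ⊆ Y ∧ Y.card = X.card + 1),
      Finsupp.single Y (1 : ℂ)

/-- `IsSJC n k h v` : `(v 0, v 1, …, v (h-1))` is a symmetric Jordan chain in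
`V(B(n))`: a sequence of `h ≥ 1` nonzero homogeneous elements, `v i` of rank
`k + i`, with `U (v i) = v (i+1)`, `U (v (h-1)) = 0`, and the symmetry condition
`r(v_1) + r(v_h) = n` (which for `h = 1` reads `2 r(v_1) = n`). -/
def IsSJC (n k h : ℕ) (v : ℕ → V n) : Prop :=
  1 ≤ h ∧
  (∀ i < h, v i ≠ 0 ∧ v i ∈ rankSubmodule n (k + i)) ∧
  (∀ i, i + 1 < h → upMap n (v i) = v (i + 1)) ∧
  upMap n (v (h - 1)) = 0 ∧
  k + (k + (h - 1)) = n

/-- The inclusion `V(B(n)) ≃ V(0) ⊆ V(B(n+1))` induced by regarding a subset of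
`[n]` as a subset of `[n+1]` not containing `n+1`. -/
noncomputable def inclMap (n : ℕ) : V n →ₗ[ℂ] V (n + 1) :=
  Finsupp.lmapDomain ℂ ℂ (fun X : Finset (Fin n) =>
    X.map ⟨Fin.castSucc, Fin.castSucc_injective n⟩)

/-- The map `R : V(0) → V(B(n+1))`, `R(v) = v̄`, induced by
`X ↦ X ∪ {n+1}` for `X ⊆ [n]` (here `V(0) ≅ V(B(n))`). -/
noncomputable def barMap (n : ℕ) : V n →ₗ[ℂ] V (n + 1) :=
  Finsupp.lmapDomain ℂ ℂ (fun X : Finset (Fin n) =>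
    insert (Fin.last n) (X.map ⟨Fin.castSucc, Fin.castSucc_injective n⟩))

/-!
Write `U` for the up operator and `D = Uᵀ` for the down operator on the subsets of an `n`-set.
Two distinct sets have a common upper cover iff they have a common lower cover (this holds in any
modular lattice), and then both are unique; a `k`-set has `n - k` upper and `k` lower covers.
Hence `DU = UD + (n - 2k)` on rank `k`, so `‖Uf‖² = ‖Df‖² + (n - 2k) ‖f‖²` there, and `Uf = 0`
forces `f = 0` when `2k < n`.
-/

open Finset Matrix

section CommonCovers

variable {P : Type*} [Lattice P] [Fintype P] [DecidableRel ((· ⋖ ·) : P → P → Prop)] {a b : P}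

lemma card_common_upper_covers_of_ne (hab : a ≠ b) :
    #{c | a ⋖ c ∧ b ⋖ c} = if a ⋖ a ⊔ b ∧ b ⋖ a ⊔ b then 1 else 0 := by
  have hsup {c} (h : a ⋖ c ∧ b ⋖ c) : a ⊔ b = c := h.1.wcovBy.sup_eq h.2.wcovBy hab
  split_ifs with h
  · exact card_eq_one.2 ⟨a ⊔ b, eq_singleton_iff_unique_mem.2
      ⟨mem_filter.2 ⟨mem_univ _, h⟩, fun c hc => (hsup (mem_filter.1 hc).2).symm⟩⟩
  · exact card_eq_zero.2 <| filter_eq_empty_iff.2 fun c _ hc => h (hsup hc ▸ hc)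

lemma card_common_lower_covers_of_ne (hab : a ≠ b) :
    #{c | c ⋖ a ∧ c ⋖ b} = if a ⊓ b ⋖ a ∧ a ⊓ b ⋖ b then 1 else 0 := by
  have hinf {c} (h : c ⋖ a ∧ c ⋖ b) : a ⊓ b = c := h.1.wcovBy.inf_eq h.2.wcovBy hab
  split_ifs with h
  · exact card_eq_one.2 ⟨a ⊓ b, eq_singleton_iff_unique_mem.2
      ⟨mem_filter.2 ⟨mem_univ _, h⟩, fun c hc => (hinf (mem_filter.1 hc).2).symm⟩⟩
  · exact card_eq_zero.2 <| filter_eq_empty_iff.2 fun c _ hc => h (hinf hc ▸ hc)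

lemma card_common_upper_covers_eq_card_common_lower_covers
    [IsWeakUpperModularLattice P] [IsWeakLowerModularLattice P] (hab : a ≠ b) :
    #{c | a ⋖ c ∧ b ⋖ c} = #{c | c ⋖ a ∧ c ⋖ b} := by
  rw [card_common_upper_covers_of_ne hab, card_common_lower_covers_of_ne hab]
  refine if_congr ⟨fun h => ⟨?_, ?_⟩, fun h => ⟨?_, ?_⟩⟩ rfl rfl
  · exact inf_covBy_of_covBy_sup_of_covBy_sup_left h.1 h.2
  · exact inf_covBy_of_covBy_sup_of_covBy_sup_right h.1 h.2
  · exact covBy_sup_of_inf_covBy_of_inf_covBy_left h.1 h.2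
  · exact covBy_sup_of_inf_covBy_of_inf_covBy_right h.1 h.2

end CommonCovers

namespace Finset

variable {α : Type*} [DecidableEq α]

lemma covBy_iff_subset_card_eq {s t : Finset α} : s ⋖ t ↔ s ⊆ t ∧ #t = #s + 1 := by
  rw [covBy_iff_card_sdiff_eq_one]
  refine and_congr_right fun hst => ?_
  rw [card_sdiff_of_subset hst]
  have := card_le_card hst
  omega

instance decidableRelCovBy : DecidableRel ((· ⋖ ·) : Finset α → Finset α → Prop) :=
  fun _ _ => decidable_of_iff _ covBy_iff_subset_card_eq.symm

variable [Fintype α]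

lemma card_upper_covers (s : Finset α) : #{t | s ⋖ t} = Fintype.card α - #s := by
  have : ({t | s ⋖ t} : Finset (Finset α)) = sᶜ.image (insert · s) := by
    ext t
    simp [covBy_iff_exists_insert]
  rw [this, card_image_of_injOn s.insert_inj_on', card_compl]

lemma card_lower_covers (s : Finset α) : #{t | t ⋖ s} = #s := by
  have : ({t | t ⋖ s} : Finset (Finset α)) = s.image s.erase := by
    ext t
    simp [covBy_iff_exists_erase]
  rw [this, card_image_of_injOn s.erase_injOn]

end Finset

section CoverMatrix

variable (P R : Type*) [Preorder P] [DecidableRel ((· ⋖ ·) : P → P → Prop)]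

def coverMatrix [Zero R] [One R] : Matrix P P R :=
  of fun y x => if x ⋖ y then 1 else 0

lemma conjTranspose_coverMatrix [Semiring R] [StarRing R] :
    (coverMatrix P R)ᴴ = (coverMatrix P R)ᵀ := by
  ext
  simp [coverMatrix, apply_ite star]

variable {P R} [Fintype P] [NonAssocSemiring R]

lemma transpose_coverMatrix_mul_apply (x x' : P) :
    ((coverMatrix P R)ᵀ * coverMatrix P R) x x' = #{y | x ⋖ y ∧ x' ⋖ y} := by
  simp only [coverMatrix, mul_apply, transpose_apply, of_apply, ite_zero_mul_ite_zero, mul_one,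
    natCast_card_filter]

lemma coverMatrix_mul_transpose_apply (x x' : P) :
    (coverMatrix P R * (coverMatrix P R)ᵀ) x x' = #{y | y ⋖ x ∧ y ⋖ x'} := by
  simp only [coverMatrix, mul_apply, transpose_apply, of_apply, ite_zero_mul_ite_zero, mul_one,
    natCast_card_filter]

end CoverMatrix

lemma star_mulVec_dotProduct_mulVec {m n R : Type*} [Fintype m] [Fintype n] [NonUnitalSemiring R]
    [StarRing R] (M : Matrix m n R) (v : n → R) :
    star (M *ᵥ v) ⬝ᵥ (M *ᵥ v) = star v ⬝ᵥ ((Mᴴ * M) *ᵥ v) := by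
  rw [star_mulVec, ← dotProduct_mulVec, mulVec_mulVec]

section BooleanLattice

variable {α : Type*} [Fintype α] [DecidableEq α]

theorem transpose_coverMatrix_mul_eq_mul_transpose_add_diagonal {R : Type*} [Ring R] :
    (coverMatrix (Finset α) R)ᵀ * coverMatrix (Finset α) R =
      coverMatrix (Finset α) R * (coverMatrix (Finset α) R)ᵀ +
        diagonal fun s => (Fintype.card α : R) - 2 * #s := by
  ext s t
  rw [Matrix.add_apply, transpose_coverMatrix_mul_apply, coverMatrix_mul_transpose_apply]
  rcases eq_or_ne s t with rfl | hst
  · simp only [and_self, card_upper_covers, card_lower_covers, diagonal_apply_eq,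
      Nat.cast_sub (card_le_univ s)]
    rw [two_mul]
    abel
  · rw [card_common_upper_covers_eq_card_common_lower_covers hst, diagonal_apply_ne _ hst,
      add_zero]

theorem star_coverMatrix_mulVec_dotProduct_of_support_subset {R : Type*} [CommRing R] [StarRing R]
    {k : ℕ} {v : Finset α → R} (hv : Function.support v ⊆ {s | #s = k}) :
    star (coverMatrix (Finset α) R *ᵥ v) ⬝ᵥ (coverMatrix (Finset α) R *ᵥ v) =
      star ((coverMatrix (Finset α) R)ᵀ *ᵥ v) ⬝ᵥ ((coverMatrix (Finset α) R)ᵀ *ᵥ v) +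
        ((Fintype.card α : R) - 2 * k) * (star v ⬝ᵥ v) := by
  have hdiag : (diagonal fun s : Finset α => (Fintype.card α : R) - 2 * #s) *ᵥ v =
      ((Fintype.card α : R) - 2 * k) • v := by
    ext s
    rw [mulVec_diagonal, Pi.smul_apply, smul_eq_mul]
    by_cases hs : v s = 0
    · simp [hs]
    · rw [show #s = k from hv hs]
  rw [star_mulVec_dotProduct_mulVec, star_mulVec_dotProduct_mulVec, conjTranspose_coverMatrix,
    transpose_coverMatrix_mul_eq_mul_transpose_add_diagonal, add_mulVec, dotProduct_add, hdiag,
    dotProduct_smul, smul_eq_mul, ← conjTranspose_coverMatrix, conjTranspose_conjTranspose]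

open scoped ComplexOrder in
theorem eq_zero_of_coverMatrix_mulVec_eq_zero {𝕜 : Type*} [RCLike 𝕜] {k : ℕ}
    (hk : 2 * k < Fintype.card α) {v : Finset α → 𝕜} (hv : Function.support v ⊆ {s | #s = k})
    (h : coverMatrix (Finset α) 𝕜 *ᵥ v = 0) : v = 0 := by
  have hc : 0 < (Fintype.card α : 𝕜) - 2 * k := sub_pos.2 (by exact_mod_cast hk)
  have hnorm := star_coverMatrix_mulVec_dotProduct_of_support_subset hv
  rw [h, star_zero, zero_dotProduct] at hnorm
  obtain ⟨-, hscaled⟩ := (add_eq_zero_iff_of_nonneg (dotProduct_star_self_nonneg _)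
    (mul_nonneg hc.le (dotProduct_star_self_nonneg _))).1 hnorm.symm
  exact dotProduct_star_self_eq_zero.1 ((mul_eq_zero.1 hscaled).resolve_left hc.ne')

end BooleanLattice

lemma coe_upMap (n : ℕ) (f : V n) : ⇑(upMap n f) = coverMatrix (Finset (Fin n)) ℂ *ᵥ ⇑f := by
  ext Y
  simp [upMap, Finsupp.lift_apply, Finsupp.sum_fintype, mulVec, dotProduct, coverMatrix,
    Finsupp.finsetSum_apply, Finsupp.single_apply, covBy_iff_subset_card_eq]

/-- **Theorem.** For every `n` and every `k` with `2k < n`, the restriction of the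
up operator `U` to `V(B(n)_k)` is injective (as a map into `V(B(n)_{k+1})`). -/
theorem upMap_injOn_lower_half (n k : ℕ) (hk : 2 * k < n) :
    Set.InjOn (upMap n) (rankSubmodule n k : Set (V n)) := by
  refine LinearMap.injOn_of_disjoint_ker le_rfl (Submodule.disjoint_def.2 fun f hf hUf => ?_)
  have hsupp : Function.support f ⊆ {s | #s = k} := by
    rw [Finsupp.fun_support_eq]
    exact (Finsupp.mem_supported ℂ f).1 hf
  have hcov : coverMatrix (Finset (Fin n)) ℂ *ᵥ ⇑f = 0 := by
    rw [← coe_upMap, LinearMap.mem_ker.1 hUf, Finsupp.coe_zero]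
  exact DFunLike.coe_injective <|
    eq_zero_of_coverMatrix_mulVec_eq_zero (by simpa using hk) hsupp hcov
end

section
/- Let n = 2k be even and let x ∈ V(B(n)_k) be nonzero with U_0(x) = 0, where U_0 is the up operator of V(B(n)). Identify V(B(n)) with the span V(0) in V(B(n+1)) of subsets not containing n+1, and let R : V(0) → V(B(n+1)) be the linear map induced by X ↦ X ∪ {n+1}. Then, with U the up operator of V(B(n+1)): U(x) = R(x), R(x) ≠ 0, and U(R(x)) = 0; consequently (x, R(x)) is a symmetric Jordan chain in V(B(n+1)) (its ranks k and k+1 satisfy k + (k+1) = n+1). -/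
open Finset

def upCovers {α : Type*} [Fintype α] [DecidableEq α] (X : Finset α) : Finset (Finset α) :=
  univ.filter fun Y => X ⊆ Y ∧ Y.card = X.card + 1

theorem upMap_single {m : ℕ} (X : Finset (Fin m)) (c : ℂ) :
    upMap m (Finsupp.single X c) = c • ∑ Y ∈ upCovers X, Finsupp.single Y 1 := by
  simp [upMap, upCovers, Finsupp.lift_apply, Finsupp.sum_single_index]

theorem lmapDomain_sum_single_one {α β : Type*} (e : α ↪ β) (s : Finset α) :
    Finsupp.lmapDomain ℂ ℂ e (∑ Y ∈ s, Finsupp.single Y 1) =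
      ∑ Y ∈ s.map e, Finsupp.single Y (1 : ℂ) := by
  simp [Finsupp.mapDomain_single]

theorem lmapDomain_mem_rankSubmodule {m m' k d : ℕ} {f : Finset (Fin m) → Finset (Fin m')}
    (hf : ∀ X, (f X).card = X.card + d) {x : V m} (hx : x ∈ rankSubmodule m k) :
    Finsupp.lmapDomain ℂ ℂ f x ∈ rankSubmodule m' (k + d) := by
  have hx' := Submodule.mem_map_of_mem (f := Finsupp.lmapDomain ℂ ℂ f) hx
  rw [rankSubmodule, Finsupp.lmapDomain_supported] at hx'
  refine Finsupp.supported_mono ?_ hx'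
  rintro _ ⟨X, hX, rfl⟩
  simp_all

section Extension

variable {n : ℕ}

variable (n) in
def inclEmb : Finset (Fin n) ↪ Finset (Fin (n + 1)) :=
  (mapEmbedding Fin.castSuccEmb).toEmbedding

theorem inclEmb_apply (X : Finset (Fin n)) : inclEmb n X = X.map Fin.castSuccEmb := rfl

theorem card_inclEmb (X : Finset (Fin n)) : (inclEmb n X).card = X.card := card_map _

theorem inclEmb_subset_inclEmb {X Y : Finset (Fin n)} : inclEmb n X ⊆ inclEmb n Y ↔ X ⊆ Y :=
  map_subset_map

theorem last_notMem_inclEmb (X : Finset (Fin n)) : Fin.last n ∉ inclEmb n X := by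
  simp [inclEmb_apply, Fin.castSucc_ne_last]

theorem exists_inclEmb_eq {Y : Finset (Fin (n + 1))} (h : Fin.last n ∉ Y) :
    ∃ Y₀, inclEmb n Y₀ = Y := by
  have hY : Y ⊆ univ.map Fin.castSuccEmb := by
    intro y hy
    obtain ⟨z, rfl⟩ := Fin.exists_castSucc_eq.mpr (ne_of_mem_of_not_mem hy h)
    simp
  obtain ⟨Y₀, -, rfl⟩ := subset_map_iff.mp hY
  exact ⟨Y₀, rfl⟩

variable (n) in
def barEmb : Finset (Fin n) ↪ Finset (Fin (n + 1)) where
  toFun X := insert (Fin.last n) (inclEmb n X)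
  inj' A B h := by
    simpa [erase_insert (last_notMem_inclEmb _)] using congr_arg (erase · (Fin.last n)) h

theorem barEmb_apply (X : Finset (Fin n)) : barEmb n X = insert (Fin.last n) (inclEmb n X) := rfl

theorem card_barEmb (X : Finset (Fin n)) : (barEmb n X).card = X.card + 1 := by
  rw [barEmb_apply, card_insert_of_notMem (last_notMem_inclEmb X), card_inclEmb]

theorem inclMap_eq : inclMap n = Finsupp.lmapDomain ℂ ℂ (inclEmb n) := rfl

theorem barMap_eq : barMap n = Finsupp.lmapDomain ℂ ℂ (barEmb n) := rfl

theorem upCovers_inclEmb (X : Finset (Fin n)) :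
    upCovers (inclEmb n X) = insert (barEmb n X) ((upCovers X).map (inclEmb n)) := by
  ext Y
  simp only [upCovers, mem_filter, mem_univ, true_and, mem_insert, mem_map, card_inclEmb]
  constructor
  · rintro ⟨hXY, hcard⟩
    by_cases hY : Fin.last n ∈ Y
    · exact .inl (eq_of_subset_of_card_le (insert_subset hY hXY)
        (by rw [← barEmb_apply, card_barEmb, hcard])).symm
    · obtain ⟨Y₀, rfl⟩ := exists_inclEmb_eq hY
      exact .inr ⟨Y₀, ⟨inclEmb_subset_inclEmb.1 hXY, by rwa [card_inclEmb] at hcard⟩, rfl⟩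
  · rintro (rfl | ⟨Y₀, ⟨hXY, hcard⟩, rfl⟩)
    · exact ⟨subset_insert _ _, card_barEmb X⟩
    · exact ⟨inclEmb_subset_inclEmb.2 hXY, by rw [card_inclEmb, hcard]⟩

theorem upCovers_barEmb (X : Finset (Fin n)) :
    upCovers (barEmb n X) = (upCovers X).map (barEmb n) := by
  ext Y
  simp only [upCovers, mem_filter, mem_univ, true_and, mem_map, card_barEmb]
  constructor
  · rintro ⟨hXY, hcard⟩
    obtain ⟨Y₀, hY₀⟩ := exists_inclEmb_eq (notMem_erase (Fin.last n) Y)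
    have hYeq : barEmb n Y₀ = Y := by
      rw [barEmb_apply, hY₀, insert_erase (hXY (mem_insert_self _ _))]
    refine ⟨Y₀, ⟨?_, ?_⟩, hYeq⟩
    · rw [← inclEmb_subset_inclEmb, hY₀, subset_erase]
      exact ⟨(insert_subset_iff.1 hXY).2, last_notMem_inclEmb X⟩
    · have := card_barEmb Y₀
      rw [hYeq] at this
      omega
  · rintro ⟨Y₀, ⟨hXY, hcard⟩, rfl⟩
    exact ⟨insert_subset_insert _ (inclEmb_subset_inclEmb.2 hXY), by rw [card_barEmb, hcard]⟩

theorem upMap_inclMap (x : V n) :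
    upMap (n + 1) (inclMap n x) = inclMap n (upMap n x) + barMap n x := by
  suffices upMap (n + 1) ∘ₗ inclMap n = inclMap n ∘ₗ upMap n + barMap n from
    LinearMap.congr_fun this x
  refine Finsupp.lhom_ext fun X c => ?_
  have hbar : barEmb n X ∉ (upCovers X).map (inclEmb n) := by
    simp only [mem_map, not_exists, not_and]
    exact fun Y₀ _ h => last_notMem_inclEmb Y₀ (h ▸ mem_insert_self _ _)
  simp only [LinearMap.comp_apply, LinearMap.add_apply, inclMap_eq, barMap_eq,
    Finsupp.lmapDomain_apply, Finsupp.mapDomain_single]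
  rw [upMap_single, upMap_single, upCovers_inclEmb, sum_insert hbar,
    ← Finsupp.lmapDomain_apply ℂ ℂ, map_smul, lmapDomain_sum_single_one, smul_add,
    Finsupp.smul_single_one]
  exact add_comm _ _

theorem upMap_barMap (x : V n) : upMap (n + 1) (barMap n x) = barMap n (upMap n x) := by
  suffices upMap (n + 1) ∘ₗ barMap n = barMap n ∘ₗ upMap n from LinearMap.congr_fun this x
  refine Finsupp.lhom_ext fun X c => ?_
  simp only [LinearMap.comp_apply, barMap_eq, Finsupp.lmapDomain_apply, Finsupp.mapDomain_single]
  rw [upMap_single, upMap_single, upCovers_barEmb, ← Finsupp.lmapDomain_apply ℂ ℂ, map_smul,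
    lmapDomain_sum_single_one]

theorem inclMap_injective : Function.Injective (inclMap n) :=
  Finsupp.mapDomain_injective (inclEmb n).injective

theorem barMap_injective : Function.Injective (barMap n) :=
  Finsupp.mapDomain_injective (barEmb n).injective

theorem inclMap_mem_rankSubmodule {k : ℕ} {x : V n} (hx : x ∈ rankSubmodule n k) :
    inclMap n x ∈ rankSubmodule (n + 1) k :=
  lmapDomain_mem_rankSubmodule (d := 0) card_inclEmb hx

theorem barMap_mem_rankSubmodule {k : ℕ} {x : V n} (hx : x ∈ rankSubmodule n k) :
    barMap n x ∈ rankSubmodule (n + 1) (k + 1) :=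
  lmapDomain_mem_rankSubmodule card_barEmb hx

end Extension

theorem isSJC_two {m k : ℕ} {v w : V m} (hv : v ≠ 0) (hvk : v ∈ rankSubmodule m k) (hw : w ≠ 0)
    (hwk : w ∈ rankSubmodule m (k + 1)) (hvw : upMap m v = w) (hw0 : upMap m w = 0)
    (hm : 2 * k + 1 = m) :
    IsSJC m k 2 (fun i => if i = 0 then v else w) := by
  refine ⟨one_le_two, fun i hi => ?_, fun i hi => ?_, hw0, by omega⟩
  · interval_cases i
    exacts [⟨hv, hvk⟩, ⟨hw, hwk⟩]
  · obtain rfl : i = 0 := by omega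
    exact hvw

/-- **Theorem.** Let `n = 2k` and let `x ∈ V(B(n)_k)` be nonzero with `U₀(x) = 0`.
Identifying `V(B(n))` with `V(0) ⊆ V(B(n+1))` and writing `R` for the map induced by
`X ↦ X ∪ {n+1}`, one has `U(x) = R(x)`, `R(x) ≠ 0`, `U(R(x)) = 0`; consequently
`(x, R(x))` is a symmetric Jordan chain in `V(B(n+1))` (with ranks `k` and `k+1`,
`k + (k+1) = n+1`). -/
theorem sjc_of_middle_kernel (n k : ℕ) (hn : n = 2 * k) (x : V n)
    (hx : x ∈ rankSubmodule n k) (hx0 : x ≠ 0) (hker : upMap n x = 0) :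
    upMap (n + 1) (inclMap n x) = barMap n x ∧
    barMap n x ≠ 0 ∧
    upMap (n + 1) (barMap n x) = 0 ∧
    IsSJC (n + 1) k 2 (fun i => if i = 0 then inclMap n x else barMap n x) := by
  have hup : upMap (n + 1) (inclMap n x) = barMap n x := by
    rw [upMap_inclMap, hker, map_zero, zero_add]
  have hupbar : upMap (n + 1) (barMap n x) = 0 := by rw [upMap_barMap, hker, map_zero]
  have hincl : inclMap n x ≠ 0 := (map_ne_zero_iff _ inclMap_injective).2 hx0
  have hbar : barMap n x ≠ 0 := (map_ne_zero_iff _ barMap_injective).2 hx0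
  exact ⟨hup, hbar, hupbar, isSJC_two hincl (inclMap_mem_rankSubmodule hx) hbar
    (barMap_mem_rankSubmodule hx) hup hupbar (by omega)⟩
end

section
/- For every natural number n and every k with k + 1 ≤ n, the rank of the up operator U restricted to V(B(n)_k), viewed as a linear map into V(B(n)_{k+1}), equals min(C(n,k), C(n,k+1)). -/
/-!
On the layer of `k`-sets the up operator is the inclusion matrix `U_k` of `k`-sets in
`(k+1)`-sets. Counting common supersets and common subsets gives the relation
`U_kᴴ U_k = U_{k-1} U_{k-1}ᴴ + (n - 2k)` (with `U_{-1} = 0`). Hence for `2k < n` the matrix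
`U_kᴴ U_k` is positive definite and `U_k` has full column rank, while for `n ≤ 2k` the same
relation one layer up makes `U_k U_kᴴ` positive definite and `U_k` has full row rank. Either way
the rank is the smaller of the two dimensions `C(n,k)`, `C(n,k+1)`.
-/

open Finset Matrix ComplexOrder

abbrev Layer (n k : ℕ) : Type := {X : Finset (Fin n) // #X = k}

theorem card_layer (n k : ℕ) : Fintype.card (Layer n k) = n.choose k := by
  rw [Fintype.card_finset_len, Fintype.card_fin]

theorem sum_layer_eq_sum_powersetCard {M : Type*} [AddCommMonoid M] (n k : ℕ)
    (f : Finset (Fin n) → M) :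
    ∑ X : Layer n k, f X = ∑ X ∈ powersetCard k univ, f X :=
  (sum_subtype _ (fun _ => mem_powersetCard_univ) f).symm

section InclusionMatrix

variable (𝕜 : Type*) [RCLike 𝕜] (n k : ℕ)

def inclusionMatrix : Matrix (Layer n (k + 1)) (Layer n k) 𝕜 :=
  Matrix.of fun Y X => if X.1 ⊆ Y.1 then 1 else 0

variable {𝕜 n k}

theorem conjTranspose_inclusionMatrix_mul_apply (X X' : Layer n k) :
    ((inclusionMatrix 𝕜 n k)ᴴ * inclusionMatrix 𝕜 n k) X X' =
      #{Z ∈ powersetCard (k + 1) univ | X.1 ∪ X'.1 ⊆ Z} := by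
  simp only [mul_apply, conjTranspose_apply, inclusionMatrix, of_apply, apply_ite star, star_one,
    star_zero, ite_mul, one_mul, zero_mul, ← ite_and, ← union_subset_iff]
  rw [sum_layer_eq_sum_powersetCard n (k + 1) fun Z => if X.1 ∪ X'.1 ⊆ Z then (1 : 𝕜) else 0,
    sum_boole]

theorem inclusionMatrix_mul_conjTranspose_apply (X X' : Layer n (k + 1)) :
    (inclusionMatrix 𝕜 n k * (inclusionMatrix 𝕜 n k)ᴴ) X X' = (#(X.1 ∩ X'.1)).choose k := by
  simp only [mul_apply, conjTranspose_apply, inclusionMatrix, of_apply, apply_ite star, star_one,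
    star_zero, ite_mul, one_mul, zero_mul, ← ite_and, ← subset_inter_iff]
  rw [sum_layer_eq_sum_powersetCard n k (fun W => if W ⊆ X.1 ∩ X'.1 then (1 : 𝕜) else 0), sum_boole,
    ← card_powersetCard]
  congr 3
  ext W
  simp [mem_powersetCard, and_comm]

theorem card_filter_powersetCard_univ_subset {S : Finset (Fin n)} {m : ℕ} (hS : #S ≤ m) :
    #{Z ∈ powersetCard m univ | S ⊆ Z} = (n - #S).choose (m - #S) := by
  rw [card_filter_powersetCard_subset S univ m (subset_univ S) hS, card_univ, Fintype.card_fin]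

-- The commutation relation `DU - UD = (n - 2r)` on the layer `r = k + 1`, with `D = Uᴴ`.
theorem inclusionMatrix_commutator :
    (inclusionMatrix 𝕜 n (k + 1))ᴴ * inclusionMatrix 𝕜 n (k + 1)
        + ((2 * (k + 1) : ℕ) : Matrix _ _ 𝕜)
      = inclusionMatrix 𝕜 n k * (inclusionMatrix 𝕜 n k)ᴴ + (n : Matrix _ _ 𝕜) := by
  ext X X'
  rw [Matrix.add_apply, Matrix.add_apply, conjTranspose_inclusionMatrix_mul_apply,
    inclusionMatrix_mul_conjTranspose_apply, ← diagonal_natCast, ← diagonal_natCast,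
    diagonal_apply, diagonal_apply]
  by_cases hXX' : X = X'
  · subst hXX'
    have hk : k + 1 ≤ n := X.2 ▸ card_le_univ X.1 |>.trans_eq (Fintype.card_fin n)
    rw [if_pos rfl, if_pos rfl, union_self, inter_self,
      card_filter_powersetCard_univ_subset (by omega), X.2,
      show k + 2 - (k + 1) = 1 by omega, Nat.choose_one_right, Nat.choose_succ_self_right]
    push_cast [Nat.cast_sub hk]
    ring
  · rw [if_neg hXX', if_neg hXX', add_zero, add_zero]
    have hsum : #(X.1 ∪ X'.1) + #(X.1 ∩ X'.1) = 2 * (k + 1) := by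
      rw [card_union_add_card_inter, X.2, X'.2]; ring
    have hunion : k + 2 ≤ #(X.1 ∪ X'.1) := by
      have hX : X.1 ⊂ X.1 ∪ X'.1 := by
        refine Finset.ssubset_iff_subset_ne.2 ⟨subset_union_left, fun h => hXX' (Subtype.ext ?_)⟩
        have hX'X : X'.1 ⊆ X.1 := h.symm ▸ subset_union_right
        exact (eq_of_subset_of_card_le hX'X (X.2.trans X'.2.symm).le).symm
      have := card_lt_card hX
      omega
    rcases hunion.eq_or_lt with h | h
    · rw [card_filter_powersetCard_univ_subset h.ge, ← h, show #(X.1 ∩ X'.1) = k by omega,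
        Nat.sub_self, Nat.choose_zero_right, Nat.choose_self]
    · rw [filter_false_of_mem fun Z hZ hsub =>
          (card_le_card hsub).not_gt (mem_powersetCard_univ.1 hZ ▸ h),
        Nat.choose_eq_zero_of_lt (by omega : #(X.1 ∩ X'.1) < k)]
      simp

theorem conjTranspose_inclusionMatrix_zero_mul :
    (inclusionMatrix 𝕜 n 0)ᴴ * inclusionMatrix 𝕜 n 0 = (n : Matrix _ _ 𝕜) := by
  ext X X'
  obtain rfl : X = X' := Subtype.ext <| by rw [card_eq_zero.1 X.2, card_eq_zero.1 X'.2]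
  rw [conjTranspose_inclusionMatrix_mul_apply, ← diagonal_natCast, diagonal_apply_eq, union_self,
    card_filter_powersetCard_univ_subset (by omega), X.2]
  simp

theorem posDef_conjTranspose_inclusionMatrix_mul (h : 2 * k < n) :
    ((inclusionMatrix 𝕜 n k)ᴴ * inclusionMatrix 𝕜 n k).PosDef := by
  cases k with
  | zero => exact conjTranspose_inclusionMatrix_zero_mul (𝕜 := 𝕜) ▸ PosDef.natCast n (by omega)
  | succ j =>
    have heq : (inclusionMatrix 𝕜 n (j + 1))ᴴ * inclusionMatrix 𝕜 n (j + 1)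
        = inclusionMatrix 𝕜 n j * (inclusionMatrix 𝕜 n j)ᴴ
          + ((n - 2 * (j + 1) : ℕ) : Matrix _ _ 𝕜) := by
      refine add_right_cancel (b := ((2 * (j + 1) : ℕ) : Matrix _ _ 𝕜)) ?_
      rw [inclusionMatrix_commutator, add_assoc, ← Nat.cast_add, Nat.sub_add_cancel h.le]
    exact heq ▸ PosDef.posSemidef_add (posSemidef_self_mul_conjTranspose _) (.natCast _ (by omega))

theorem posDef_inclusionMatrix_mul_conjTranspose (h : n ≤ 2 * k) :
    (inclusionMatrix 𝕜 n k * (inclusionMatrix 𝕜 n k)ᴴ).PosDef := by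
  have heq : inclusionMatrix 𝕜 n k * (inclusionMatrix 𝕜 n k)ᴴ
      = (inclusionMatrix 𝕜 n (k + 1))ᴴ * inclusionMatrix 𝕜 n (k + 1)
        + ((2 * (k + 1) - n : ℕ) : Matrix _ _ 𝕜) := by
    refine add_right_cancel (b := (n : Matrix _ _ 𝕜)) ?_
    rw [add_assoc, ← Nat.cast_add, Nat.sub_add_cancel (by omega), inclusionMatrix_commutator]
  exact heq ▸ PosDef.posSemidef_add (posSemidef_conjTranspose_mul_self _) (.natCast _ (by omega))

theorem rank_inclusionMatrix :
    (inclusionMatrix 𝕜 n k).rank = min (n.choose k) (n.choose (k + 1)) := by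
  rcases lt_or_ge (2 * k) n with h | h
  · have hrank : (inclusionMatrix 𝕜 n k).rank = n.choose k := by
      rw [← rank_conjTranspose_mul_self,
        rank_of_isUnit _ (posDef_conjTranspose_inclusionMatrix_mul h).isUnit, card_layer]
    rw [hrank, min_eq_left (hrank ▸ card_layer n (k + 1) ▸ rank_le_card_height _)]
  · have hrank : (inclusionMatrix 𝕜 n k).rank = n.choose (k + 1) := by
      rw [← rank_self_mul_conjTranspose,
        rank_of_isUnit _ (posDef_inclusionMatrix_mul_conjTranspose h).isUnit, card_layer]
    rw [hrank, min_eq_right (hrank ▸ card_layer n k ▸ rank_le_card_width _)]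

end InclusionMatrix

noncomputable def layerEmbedding (n k : ℕ) : (Layer n k → ℂ) →ₗ[ℂ] V n :=
  Fintype.linearCombination ℂ fun X => Finsupp.single X.1 1

theorem layerEmbedding_injective (n k : ℕ) : Function.Injective (layerEmbedding n k) :=
  linearIndependent_iff_injective_fintypeLinearCombination.1 <|
    (Finsupp.linearIndependent_single_one ℂ (Finset (Fin n))).comp _ Subtype.val_injective

theorem range_layerEmbedding (n k : ℕ) :
    LinearMap.range (layerEmbedding n k) = rankSubmodule n k := by
  rw [layerEmbedding, Fintype.range_linearCombination, rankSubmodule,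
    Finsupp.supported_eq_span_single]
  congr 1
  ext v
  simp

theorem layerEmbedding_single_one {n k : ℕ} (X : Layer n k) :
    layerEmbedding n k (Pi.single X 1) = Finsupp.single X.1 1 := by
  rw [layerEmbedding, Fintype.linearCombination_apply_single, one_smul]

theorem upMap_single_one (n : ℕ) (X : Finset (Fin n)) :
    upMap n (Finsupp.single X 1) =
      ∑ Y ∈ univ.filter (fun Y => X ⊆ Y ∧ #Y = #X + 1), Finsupp.single Y 1 := by
  rw [upMap, Finsupp.lift_apply, Finsupp.sum_single_index, one_smul]
  exact zero_smul ℂ _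

theorem upMap_comp_layerEmbedding (n k : ℕ) :
    upMap n ∘ₗ layerEmbedding n k =
      layerEmbedding n (k + 1) ∘ₗ (inclusionMatrix ℂ n k).mulVecLin := by
  refine (Pi.basisFun ℂ (Layer n k)).ext fun X => ?_
  rw [Pi.basisFun_apply, LinearMap.comp_apply, LinearMap.comp_apply, layerEmbedding_single_one,
    upMap_single_one, X.2, mulVecLin_apply, mulVec_single_one, layerEmbedding,
    Fintype.linearCombination_apply]
  simp only [col_apply, inclusionMatrix, of_apply, ite_smul, one_smul, zero_smul]
  rw [sum_layer_eq_sum_powersetCard n (k + 1)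
    fun Y => if X.1 ⊆ Y then Finsupp.single Y (1 : ℂ) else 0, ← sum_filter]
  congr 1
  ext Y
  simp [and_comm]

theorem rank_upMap_restricted_general (n k : ℕ) :
    Module.finrank ℂ ↥((rankSubmodule n k).map (upMap n)) =
      min (n.choose k) (n.choose (k + 1)) := by
  rw [← range_layerEmbedding, ← LinearMap.range_comp, upMap_comp_layerEmbedding,
    LinearMap.range_comp, ← rank_inclusionMatrix (𝕜 := ℂ)]
  exact (Submodule.equivMapOfInjective _ (layerEmbedding_injective n (k + 1)) _).finrank_eq.symm

/-- **Theorem.** For every `n` and every `k` with `k + 1 ≤ n`, the rank of the up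
operator `U` restricted to `V(B(n)_k)`, viewed as a linear map into `V(B(n)_{k+1})`
(i.e. the dimension of the image `U(V(B(n)_k))`), equals `min(C(n,k), C(n,k+1))`. -/
theorem rank_upMap_restricted (n k : ℕ) (h : k + 1 ≤ n) :
    Module.finrank ℂ ↥((rankSubmodule n k).map (upMap n)) =
      min (n.choose k) (n.choose (k + 1)) :=
  rank_upMap_restricted_general n k
end
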